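/- arXiv:math/0605127 — 6 statements merged into one kernel-verified Lean document; each statement's English description precedes it below -/
import Mathlib

section
/- Let H ≥ 0 be a real number and set α = (√(1+H²) − H)². For nonnegative integers m, n define the weight w(m,n) = 1 if m = n = 0, w(m,n) = 2 if exactly one of m, n is 0, and w(m,n) = 4 if both m ≥ 1 and n ≥ 1. Let b be the greatest nonnegative integer strictly less than √(1 + exp(2·arsinh H)). Then the sum of w(m,n) over all pairs of nonnegative integers (m,n) satisfying m² + α·n² < 1 + α equals 3 + 2b. -/
/-- The multiplicity weight: 1 if m = n = 0, 2 if exactly one of m, n is 0,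
4 if both are positive. -/
def weight (p : ℕ × ℕ) : ℕ :=
  if p.1 = 0 ∧ p.2 = 0 then 1 else if p.1 = 0 ∨ p.2 = 0 then 2 else 4

/-!
With `s = √(1 + H²)` one has `exp (arsinh H) = H + s` and `(s - H)(s + H) = 1`, so
`α = exp (-2 arsinh H)` and the threshold `√(1 + exp (2 arsinh H))` is `√(1 + α⁻¹)`.
Hence on the column `m = 0` the condition `α n² < 1 + α` holds exactly for `n ≤ b`.
Since `0 < α ≤ 1`, the column `m = 1` contributes only `(1, 0)` and no pair with `m ≥ 2`
qualifies, so the weighted count is `1 + 2b` from the first column plus `2`.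
-/

open Real

def negativeModes (b : ℕ) : Finset (ℕ × ℕ) :=
  insert (1, 0) ((Finset.range (b + 1)).map ⟨Prod.mk 0, Prod.mk_right_injective 0⟩)

lemma mem_negativeModes {b : ℕ} {p : ℕ × ℕ} :
    p ∈ negativeModes b ↔ p.1 = 1 ∧ p.2 = 0 ∨ p.1 = 0 ∧ p.2 ≤ b := by
  obtain ⟨m, n⟩ := p
  simp only [negativeModes, Finset.mem_insert, Prod.mk.injEq, Finset.mem_map, Finset.mem_range,
    Order.lt_add_one_iff, Function.Embedding.coeFn_mk, exists_eq_right_right]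
  grind

lemma sum_weight_negativeModes (b : ℕ) : ∑ p ∈ negativeModes b, weight p = 3 + 2 * b := by
  have hcol : ∑ n ∈ Finset.range (b + 1), weight (0, n) = b * 2 + 1 := by
    rw [Finset.sum_range_succ', Finset.sum_const_nat (m := 2) fun n _ ↦ by simp [weight],
      Finset.card_range]
    rfl
  rw [negativeModes, Finset.sum_insert (by simp), Finset.sum_map]
  change weight (1, 0) + ∑ n ∈ Finset.range (b + 1), weight (0, n) = _
  rw [hcol, show weight (1, 0) = 2 from rfl]
  ring

section

variable {α : ℝ}

lemma lt_one_add_iff_mem_negativeModes (hα : 0 < α) (hα3 : α ≤ 3) {b : ℕ}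
    (hcol : ∀ n : ℕ, α * (n : ℝ) ^ 2 < 1 + α ↔ n ≤ b) (p : ℕ × ℕ) :
    (p.1 : ℝ) ^ 2 + α * (p.2 : ℝ) ^ 2 < 1 + α ↔ p ∈ negativeModes b := by
  obtain ⟨m, n⟩ := p
  rw [mem_negativeModes]
  have hn : 0 ≤ α * (n : ℝ) ^ 2 := by positivity
  rcases Nat.lt_or_ge m 2 with hm | hm
  · interval_cases m
    · simpa using hcol n
    · have : α * (n : ℝ) ^ 2 < α ↔ n = 0 := by
        rw [mul_lt_iff_lt_one_right hα, sq_lt_one_iff₀ n.cast_nonneg]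
        exact_mod_cast Nat.lt_one_iff
      simpa using this
  · have : (4 : ℝ) ≤ (m : ℝ) ^ 2 := by
      have : (2 : ℝ) ≤ m := by exact_mod_cast hm
      nlinarith
    exact iff_of_false (by linarith) (by omega)

lemma finsum_weight_of_lt_one_add (hα : 0 < α) (hα3 : α ≤ 3) {b : ℕ}
    (hcol : ∀ n : ℕ, α * (n : ℝ) ^ 2 < 1 + α ↔ n ≤ b) :
    (∑ᶠ p : ℕ × ℕ,
      if (p.1 : ℝ) ^ 2 + α * (p.2 : ℝ) ^ 2 < 1 + α then weight p else 0) = 3 + 2 * b := by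
  simp_rw [lt_one_add_iff_mem_negativeModes hα hα3 hcol]
  calc _ = ∑ p ∈ negativeModes b, if p ∈ negativeModes b then weight p else 0 :=
        finsum_eq_sum_of_support_subset _
          (Function.support_subset_iff'.mpr fun _ hp ↦ if_neg hp)
    _ = 3 + 2 * b := by rw [Finset.sum_ite_mem, Finset.inter_self, sum_weight_negativeModes]

lemma lt_sqrt_one_add_inv_iff (hα : 0 < α) {x : ℝ} (hx : 0 ≤ x) :
    x < √(1 + α⁻¹) ↔ α * x ^ 2 < 1 + α := by
  rw [lt_sqrt hx, ← mul_lt_mul_iff_right₀ hα, mul_add, mul_inv_cancel₀ hα.ne', mul_one, add_comm]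

end

lemma natCast_lt_iff_le_of_greatest {r : ℝ} {b : ℕ} (hb : (b : ℝ) < r)
    (hb' : ∀ b' : ℕ, (b' : ℝ) < r → b' ≤ b) (n : ℕ) : (n : ℝ) < r ↔ n ≤ b :=
  ⟨hb' n, fun h ↦ (Nat.cast_le.mpr h).trans_lt hb⟩

lemma sqrt_one_add_sq_sub_pos (H : ℝ) : 0 < √(1 + H ^ 2) - H := by
  have : |H| < √(1 + H ^ 2) := by
    rw [← sqrt_sq_eq_abs]
    exact sqrt_lt_sqrt (sq_nonneg H) (lt_one_add _)
  linarith [le_abs_self H]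

lemma sqrt_one_add_sq_sub_le_one {H : ℝ} (hH : 0 ≤ H) : √(1 + H ^ 2) - H ≤ 1 := by
  have : √(1 + H ^ 2) ≤ 1 + H := sqrt_le_iff.mpr ⟨by linarith, by nlinarith⟩
  linarith

lemma exp_two_mul_arsinh (H : ℝ) : exp (2 * arsinh H) = ((√(1 + H ^ 2) - H) ^ 2)⁻¹ := by
  have hs : √(1 + H ^ 2) ^ 2 = 1 + H ^ 2 := sq_sqrt (by positivity)
  rw [mul_comm, exp_mul, exp_arsinh, rpow_two]
  refine eq_inv_of_mul_eq_one_left ?_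
  rw [← mul_pow]
  nlinarith

/-- The total multiplicity of the negative eigenvalues
`λ_{m,n} = m² + α n² − 1 − α` of the Jacobi operator of the flat CMC `H` torus of
revolution in `S³` equals `3 + 2b`, where `b` is the greatest nonnegative integer
strictly less than `√(1 + exp(2 arsinh H))`. -/
theorem flat_cmc_torus_index (H : ℝ) (hH : 0 ≤ H) (α : ℝ)
    (hα : α = (Real.sqrt (1 + H ^ 2) - H) ^ 2) (b : ℕ)
    (hb : (b : ℝ) < Real.sqrt (1 + Real.exp (2 * Real.arsinh H)))
    (hb' : ∀ b' : ℕ, (b' : ℝ) < Real.sqrt (1 + Real.exp (2 * Real.arsinh H)) → b' ≤ b) :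
    (∑ᶠ p : ℕ × ℕ,
      if (p.1 : ℝ) ^ 2 + α * (p.2 : ℝ) ^ 2 < 1 + α then weight p else 0) = 3 + 2 * b := by
  rw [exp_two_mul_arsinh, ← hα] at hb hb'
  have hα_pos : 0 < α := hα ▸ pow_pos (sqrt_one_add_sq_sub_pos H) 2
  have hα_le : α ≤ 1 :=
    hα ▸ pow_le_one₀ (sqrt_one_add_sq_sub_pos H).le (sqrt_one_add_sq_sub_le_one hH)
  refine finsum_weight_of_lt_one_add hα_pos (by linarith) fun n ↦ ?_
  rw [← lt_sqrt_one_add_inv_iff hα_pos n.cast_nonneg]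
  exact natCast_lt_iff_le_of_greatest hb hb' n
end

section
/- Let H ≥ 0 be a real number and set α = (√(1+H²) − H)². For nonnegative integers m, n define the weight w(m,n) = 1 if m = n = 0, w(m,n) = 2 if exactly one of m, n is 0, and w(m,n) = 4 if both m ≥ 1 and n ≥ 1. Then the sum of w(m,n) over all pairs of nonnegative integers (m,n) satisfying m² + α·n² = 1 + α equals 6 if √(1 + exp(2·arsinh H)) is an integer, and equals 4 otherwise. -/
open scoped Classical in
/-- The nullity of the flat CMC `H` torus of revolution in `S³`: the total
multiplicity of the zero eigenvalue `λ_{m,n} = m² + α n² − 1 − α` is 6 when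
`√(1 + exp(2 arsinh H))` is an integer and 4 otherwise. -/
theorem flat_cmc_torus_nullity (H : ℝ) (hH : 0 ≤ H) (α : ℝ)
    (hα : α = (Real.sqrt (1 + H ^ 2) - H) ^ 2) :
    (∑ᶠ p : ℕ × ℕ,
      if (p.1 : ℝ) ^ 2 + α * (p.2 : ℝ) ^ 2 = 1 + α then weight p else 0) =
      if ∃ k : ℤ, Real.sqrt (1 + Real.exp (2 * Real.arsinh H)) = (k : ℝ) then 6 else 4 := by
  set s := Real.sqrt (1 + H ^ 2) with hs_def
  have hs : s ^ 2 = 1 + H ^ 2 := Real.sq_sqrt (by positivity)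
  have hsn : (0:ℝ) ≤ s := Real.sqrt_nonneg _
  have hα0 : 0 < α := by nlinarith
  have hHs : H ≤ s := by nlinarith
  have hs1 : s ≤ 1 + H := by nlinarith
  have hα1 : α ≤ 1 := by nlinarith
  have hexp : α * Real.exp (2 * Real.arsinh H) = 1 := by
    rw [two_mul, Real.exp_add, Real.exp_arsinh, hα, ← hs_def]
    linear_combination (s ^ 2 - H ^ 2 + 1) * hs
  have hval : 1 + Real.exp (2 * Real.arsinh H) = (1 + α) / α := by
    field_simp
    linarith
  set f : ℕ × ℕ → ℕ := fun p =>
      if (p.1 : ℝ) ^ 2 + α * (p.2 : ℝ) ^ 2 = 1 + α then weight p else 0 with hf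
  have hsol : ∀ m n : ℕ, (m:ℝ)^2 + α*(n:ℝ)^2 = 1+α →
      (m = 1 ∧ n = 1) ∨ (m = 0 ∧ α*(n:ℝ)^2 = 1+α) := by
    intro m n h
    match m with
    | 0 => exact Or.inr ⟨rfl, by simpa using h⟩
    | 1 =>
      left
      refine ⟨rfl, ?_⟩
      have h1 : α * (n:ℝ)^2 = α * 1 := by push_cast at h; linarith
      have h2 : (n:ℝ)^2 = 1 := mul_left_cancel₀ hα0.ne' h1
      have h3 : n * n = 1 := by
        have : n ^ 2 = 1 := by exact_mod_cast h2
        nlinarith [this]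
      exact Nat.dvd_one.mp ⟨n, h3.symm⟩
    | (m+2) =>
      exfalso
      push_cast at h
      have hn2 : (0:ℝ) ≤ α * (n:ℝ)^2 := by positivity
      nlinarith [sq_nonneg ((m:ℝ)), Nat.cast_nonneg (α := ℝ) m]
  have hf11 : f (1,1) = 4 := by
    simp only [hf, weight]
    norm_num
  by_cases hcond : ∃ k : ℤ, Real.sqrt (1 + Real.exp (2 * Real.arsinh H)) = (k : ℝ)
  · obtain ⟨k, hk⟩ := hcond
    have hk0 : (0:ℝ) ≤ (k:ℝ) := hk ▸ Real.sqrt_nonneg _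
    have hksq : (k:ℝ)^2 = (1+α)/α := by
      rw [← hval, ← hk, Real.sq_sqrt]
      rw [hval]
      positivity
    have hkα : α * (k:ℝ)^2 = 1 + α := by
      rw [hksq]; field_simp
    have hksq2 : (2:ℝ) ≤ (k:ℝ)^2 := by nlinarith
    have hk0Z : (0:ℤ) ≤ k := by exact_mod_cast hk0
    have hk2Z : (2:ℤ) ≤ k^2 := by exact_mod_cast hksq2
    have hk1 : (1:ℤ) ≤ k := by nlinarith
    set n₀ : ℕ := k.toNat with hn₀
    have hcast : ((n₀:ℕ):ℝ) = (k:ℝ) := by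
      rw [hn₀]
      exact_mod_cast congrArg Int.cast (Int.toNat_of_nonneg (by exact_mod_cast hk0))
    have hne : ((1,1) : ℕ × ℕ) ≠ (0, n₀) := fun h => one_ne_zero (congrArg Prod.fst h)
    have hsub : Function.support f ⊆ (({(1,1), (0,n₀)} : Finset (ℕ × ℕ)) : Set (ℕ × ℕ)) := by
      intro ⟨m, n⟩ hp
      simp only [hf, Function.mem_support, ne_eq, ite_eq_right_iff, not_forall] at hp
      obtain ⟨heq, -⟩ := hp
      rcases hsol m n heq with ⟨h1, h2⟩ | ⟨h1, h2⟩
      · simp [h1, h2]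
      · have : (n:ℝ) = (k:ℝ) := by nlinarith [Nat.cast_nonneg (α := ℝ) n]
        have : (n:ℝ) = ((n₀:ℕ):ℝ) := by rw [hcast]; exact this
        have : n = n₀ := by exact_mod_cast this
        simp [h1, this]
    rw [if_pos ⟨k, hk⟩, finsum_eq_finset_sum_of_support_subset f hsub,
      Finset.sum_pair hne, hf11]
    have hn₀0 : n₀ ≠ 0 := by rw [hn₀]; omega
    have hw : weight (0, n₀) = 2 := by simp [weight, hn₀0]
    have h0 : ((0:ℕ):ℝ) ^ 2 + α * ((n₀:ℕ):ℝ) ^ 2 = 1 + α := by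
      rw [hcast]; push_cast; linear_combination hkα
    have hfeq : f (0, n₀) = 2 := by
      show (if ((0:ℕ):ℝ) ^ 2 + α * ((n₀:ℕ):ℝ) ^ 2 = 1 + α then weight (0, n₀) else 0) = 2
      rw [if_pos h0, hw]
    rw [hfeq]
  · rw [if_neg hcond, finsum_eq_single f (1,1), hf11]
    intro ⟨m, n⟩ hp
    simp only [hf, ite_eq_right_iff]
    intro heq
    exfalso
    rcases hsol m n heq with ⟨h1, h2⟩ | ⟨h1, h2⟩
    · exact hp (by simp [h1, h2])
    · refine hcond ⟨(n : ℤ), ?_⟩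
      have hn2 : ((n:ℝ))^2 = 1 + Real.exp (2 * Real.arsinh H) := by
        rw [hval]
        field_simp
        linarith
      rw [← hn2, Real.sqrt_sq (Nat.cast_nonneg n)]
      push_cast
      ring
end

section
/- Let H ≥ 0 be a real number and set α = (√(1+H²) − H)². For nonnegative integers m, n define the weight w(m,n) = 1 if m = n = 0, w(m,n) = 2 if exactly one of m, n is 0, and w(m,n) = 4 if both m ≥ 1 and n ≥ 1. The sum of w(m,n) over all pairs of nonnegative integers (m,n) with m² + α·n² < 1 + α equals exactly 5 if and only if H ≤ 1/√3. -/
set_option maxHeartbeats 2000000 in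
/-- The Morse index of the flat CMC `H` torus of revolution in `S³` (the total
multiplicity of the negative eigenvalues `λ_{m,n} = m² + α n² − 1 − α`,
`α = (√(1+H²) − H)²`) equals exactly 5 if and only if `H ≤ 1/√3`. -/
theorem flat_cmc_torus_index_eq_five_iff (H : ℝ) (hH : 0 ≤ H) (α : ℝ)
    (hα : α = (Real.sqrt (1 + H ^ 2) - H) ^ 2) :
    (∑ᶠ p : ℕ × ℕ,
      if (p.1 : ℝ) ^ 2 + α * (p.2 : ℝ) ^ 2 < 1 + α then weight p else 0) = 5 ↔
      H ≤ 1 / Real.sqrt 3 := by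
  set s := Real.sqrt (1 + H ^ 2) with hsdef
  have hs2 : s ^ 2 = 1 + H ^ 2 := Real.sq_sqrt (by positivity)
  have hsH : H < s := by nlinarith [Real.sqrt_nonneg (1 + H ^ 2)]
  have hα0 : 0 < α := by rw [hα]; exact pow_pos (sub_pos.mpr hsH) 2
  have hα1 : α ≤ 1 := by
    rw [hα]
    nlinarith [hs2, mul_nonneg hH (le_of_lt (sub_pos.mpr hsH))]
  have hr3 : (Real.sqrt 3) ^ 2 = 3 := Real.sq_sqrt (by norm_num)
  have hr3p : 0 < Real.sqrt 3 := Real.sqrt_pos.mpr (by norm_num)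
  have key : 1/3 ≤ α ↔ H ≤ 1 / Real.sqrt 3 := by
    rw [hα]
    constructor
    · intro h
      have hap : 0 < s - H := sub_pos.mpr hsH
      have h1 : 1 ≤ (Real.sqrt 3 * (s - H)) ^ 2 := by
        rw [mul_pow, hr3]; nlinarith
      have hta : 1 ≤ Real.sqrt 3 * (s - H) := by
        nlinarith [mul_pos hr3p hap]
      rw [le_div_iff₀ hr3p]
      nlinarith [hta, hs2, hr3, mul_nonneg (mul_nonneg hr3p.le hH) (by linarith : (0:ℝ) ≤ Real.sqrt 3 * (s - H))]
    · intro h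
      rw [le_div_iff₀ hr3p] at h
      have h3H : 3 * H ^ 2 ≤ 1 := by nlinarith [hr3, mul_nonneg hH hr3p.le]
      have h2 : 2 * H ≤ s := by nlinarith [hs2, hsH, hH]
      nlinarith [hs2, hH, mul_nonneg (sub_pos.mpr hsH).le (by linarith : (0:ℝ) ≤ s - 2 * H)]
  set f : ℕ × ℕ → ℕ := fun p =>
    if (p.1 : ℝ) ^ 2 + α * (p.2 : ℝ) ^ 2 < 1 + α then weight p else 0 with hf
  have fval : ∀ m n : ℕ, ((m : ℝ) ^ 2 + α * (n : ℝ) ^ 2 < 1 + α) → f (m, n) = weight (m, n) := by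
    intro m n h
    show (if ((m : ℝ)) ^ 2 + α * ((n : ℝ)) ^ 2 < 1 + α then weight (m, n) else 0) = _
    rw [if_pos h]
  have f00 : f (0, 0) = 1 := by
    rw [fval 0 0 (by push_cast; nlinarith)]; decide
  have f10 : f (1, 0) = 2 := by
    rw [fval 1 0 (by push_cast; nlinarith)]; decide
  have f01 : f (0, 1) = 2 := by
    rw [fval 0 1 (by push_cast; nlinarith)]; decide
  by_cases hcase : 1/3 ≤ α
  · -- support is exactly the three points
    have hsupp : Function.support f ⊆ ↑({(0, 0), (1, 0), (0, 1)} : Finset (ℕ × ℕ)) := by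
      rintro ⟨m, n⟩ hp
      rw [Function.mem_support] at hp
      by_contra hmem
      simp only [Finset.coe_insert, Finset.coe_singleton, Set.mem_insert_iff,
        Set.mem_singleton_iff, Prod.mk.injEq, not_or] at hmem
      have hcases : (1 ≤ m ∧ 1 ≤ n) ∨ 2 ≤ m ∨ 2 ≤ n := by omega
      apply hp
      show (if ((m : ℝ)) ^ 2 + α * ((n : ℝ)) ^ 2 < 1 + α then weight (m, n) else 0) = 0
      rw [if_neg]
      push_neg
      rcases hcases with ⟨h1, h2⟩ | h1 | h1
      · have hm : (1 : ℝ) ≤ (m : ℝ) := by exact_mod_cast h1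
        have hn : (1 : ℝ) ≤ (n : ℝ) := by exact_mod_cast h2
        have hm2 : (1 : ℝ) ≤ (m : ℝ) ^ 2 := by nlinarith
        have hn2 : (1 : ℝ) ≤ (n : ℝ) ^ 2 := by nlinarith
        nlinarith [mul_le_mul_of_nonneg_left hn2 hα0.le]
      · have hm : (2 : ℝ) ≤ (m : ℝ) := by exact_mod_cast h1
        nlinarith [mul_nonneg hα0.le (sq_nonneg ((n : ℝ)))]
      · have hn : (2 : ℝ) ≤ (n : ℝ) := by exact_mod_cast h1
        have hn2 : (4 : ℝ) ≤ (n : ℝ) ^ 2 := by nlinarith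
        nlinarith [mul_le_mul_of_nonneg_left hn2 hα0.le, sq_nonneg ((m : ℝ))]
    have h5 : (∑ᶠ p : ℕ × ℕ, f p) = 5 := by
      rw [finsum_eq_sum_of_support_subset f hsupp]
      rw [Finset.sum_insert (by decide), Finset.sum_insert (by decide),
        Finset.sum_singleton, f00, f10, f01]
      norm_num
    rw [h5]
    exact iff_of_true rfl (key.mp hcase)
  · push_neg at hcase
    set K : ℕ := Nat.ceil (Real.sqrt (1 / α + 1)) with hK
    have hsupp : Function.support f ⊆
        ↑((Finset.range 2) ×ˢ (Finset.range (K + 1))) := by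
      rintro ⟨m, n⟩ hp
      rw [Function.mem_support] at hp
      have hc : (m : ℝ) ^ 2 + α * (n : ℝ) ^ 2 < 1 + α := by
        by_contra hcon
        apply hp
        show (if ((m : ℝ)) ^ 2 + α * ((n : ℝ)) ^ 2 < 1 + α then weight (m, n) else 0) = 0
        rw [if_neg hcon]
      simp only [Finset.coe_product, Set.mem_prod, Finset.mem_coe, Finset.mem_range]
      constructor
      · by_contra hm
        push_neg at hm
        have : (2 : ℝ) ≤ (m : ℝ) := by exact_mod_cast hm
        nlinarith [mul_nonneg hα0.le (sq_nonneg ((n : ℝ)))]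
      · by_contra hn
        push_neg at hn
        have hceil : Real.sqrt (1 / α + 1) ≤ K := Nat.le_ceil _
        have hnK : (K : ℝ) + 1 ≤ (n : ℝ) := by exact_mod_cast hn
        have hsq : Real.sqrt (1 / α + 1) ^ 2 = 1 / α + 1 :=
          Real.sq_sqrt (by positivity)
        have hsn : Real.sqrt (1 / α + 1) < (n : ℝ) := by
          have hK0 : (0:ℝ) ≤ (K : ℝ) := Nat.cast_nonneg K
          linarith
        have h2 : 1 / α + 1 < (n : ℝ) ^ 2 := by
          nlinarith [Real.sqrt_nonneg (1 / α + 1)]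
        have h3 : 1 + α < α * (n : ℝ) ^ 2 := by
          have := mul_lt_mul_of_pos_left h2 hα0
          rw [mul_add, mul_one_div, div_self hα0.ne', mul_one] at this
          linarith
        nlinarith [sq_nonneg ((m : ℝ))]
    have hK2 : 2 ≤ K := by
      have h4 : (2 : ℝ) < Real.sqrt (1 / α + 1) := by
        have h5 : (4 : ℝ) < 1 / α + 1 := by
          have h3 : (3 : ℝ) < 1 / α := by
            rw [lt_div_iff₀ hα0]; linarith
          linarith
        nlinarith [Real.sqrt_nonneg (1 / α + 1),
          Real.sq_sqrt (show (0:ℝ) ≤ 1 / α + 1 by positivity)]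
      have : (1 : ℕ) < K := by
        rw [hK, Nat.lt_ceil]; push_cast; linarith
      omega
    have f02 : f (0, 2) = 2 := by
      rw [fval 0 2 (by push_cast; nlinarith)]; decide
    have h7 : 7 ≤ ∑ᶠ p : ℕ × ℕ, f p := by
      rw [finsum_eq_sum_of_support_subset f hsupp]
      have hsub : ({(0, 0), (1, 0), (0, 1), (0, 2)} : Finset (ℕ × ℕ)) ⊆
          (Finset.range 2) ×ˢ (Finset.range (K + 1)) := by
        intro p hp
        simp only [Finset.mem_insert, Finset.mem_singleton] at hp
        simp only [Finset.mem_product, Finset.mem_range]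
        rcases hp with rfl | rfl | rfl | rfl <;> constructor <;> omega
      calc (7 : ℕ) = ∑ p ∈ ({(0, 0), (1, 0), (0, 1), (0, 2)} : Finset (ℕ × ℕ)), f p := by
            rw [Finset.sum_insert (by decide), Finset.sum_insert (by decide),
              Finset.sum_insert (by decide), Finset.sum_singleton, f00, f10, f01, f02]
            norm_num
        _ ≤ _ := Finset.sum_le_sum_of_subset hsub
    constructor
    · intro h
      rw [h] at h7
      omega
    · intro h
      exact absurd (key.mpr h) (not_le.mpr hcase)
end

section
/- Let s, t, γ be real numbers with s > 0, −s < t ≤ s, t ≠ 0, 0 < γ ≤ π/4, satisfying the closing condition (s+t)² − 4st·sin²γ = 1/4. Then −1/(16 sin²γ) < st ≤ 1/(16 cos²γ), and st = 1/(16 cos²γ) holds if and only if s = t. -/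
open Real in
/-- For parameters `s > 0`, `t ∈ (−s, s] \ {0}`, `γ ∈ (0, π/4]` satisfying the
closing condition `(s+t)² − 4st sin²γ = 1/4`, one has
`st ∈ (−(16 sin²γ)⁻¹, (16 cos²γ)⁻¹]`, with equality at the right endpoint
exactly for the flat tori `s = t`. -/
theorem closing_condition_st_range (s t γ : ℝ) (hs : 0 < s) (ht1 : -s < t) (ht2 : t ≤ s)
    (ht0 : t ≠ 0) (hγ1 : 0 < γ) (hγ2 : γ ≤ π / 4)
    (hclose : (s + t) ^ 2 - 4 * s * t * sin γ ^ 2 = 1 / 4) :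
    (-(1 / (16 * sin γ ^ 2)) < s * t ∧ s * t ≤ 1 / (16 * cos γ ^ 2)) ∧
      (s * t = 1 / (16 * cos γ ^ 2) ↔ s = t) := by
  have hπ : 0 < π := Real.pi_pos
  have hsin : 0 < sin γ := Real.sin_pos_of_pos_of_lt_pi hγ1 (by linarith)
  have hcos : 0 < cos γ := Real.cos_pos_of_mem_Ioo ⟨by linarith, by linarith⟩
  have hkey : (s - t) ^ 2 + 4 * s * t * cos γ ^ 2 = 1 / 4 := by
    linear_combination hclose + 4 * s * t * (Real.sin_sq_add_cos_sq γ)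
  have hst : 0 < s + t := by linarith
  have hup : s * t ≤ 1 / (16 * cos γ ^ 2) := by
    rw [le_div_iff₀ (by positivity)]
    nlinarith [sq_nonneg (s - t)]
  refine ⟨⟨?_, hup⟩, ?_, ?_⟩
  · rw [neg_lt, lt_div_iff₀ (by positivity)]
    nlinarith [mul_pos hst hst]
  · intro h
    have h' : s * t * (16 * cos γ ^ 2) = 1 := by
      rw [h, div_mul_cancel₀]
      positivity
    have : (s - t) ^ 2 = 0 := by nlinarith
    have := pow_eq_zero_iff (n := 2) (by norm_num) |>.mp this
    linarith
  · intro h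
    subst h
    rw [eq_div_iff (by positivity)]
    nlinarith
end

section
/- Let s, t, γ be real numbers with s > 0, −s < t ≤ s, t ≠ 0, 0 < γ ≤ π/4, satisfying (s+t)² − 4st·sin²γ = 1/4. Set μ₊ = √(1 + 16st·sin²γ), μ₋ = √(1 − 16st·cos²γ), X₊ = (−2μ₋ sin²γ + 2μ₊ cos²γ)/(2 + (μ₋ + μ₊) sin(2γ)), X₋ = (2μ₋ sin²γ + 2μ₊ cos²γ)/(2 − (μ₋ − μ₊) sin(2γ)), and r_± = π/2 − 2·arctan(X_±). Then r₊ + r₋ = 2γ. -/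
set_option maxHeartbeats 1000000 in
open Real in
/-- For a CMC torus of revolution `S_{s,t}` in `S³` subject to the closing
condition, the distances `r₊ = π/2 − 2 arctan X₊` and `r₋ = π/2 − 2 arctan X₋`
from the axis of revolution to the bulges and necks satisfy `r₊ + r₋ = 2γ`. -/
theorem bulge_neck_distance_sum (s t γ : ℝ) (hs : 0 < s) (ht1 : -s < t) (ht2 : t ≤ s)
    (ht0 : t ≠ 0) (hγ1 : 0 < γ) (hγ2 : γ ≤ π / 4)
    (hclose : (s + t) ^ 2 - 4 * s * t * sin γ ^ 2 = 1 / 4)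
    (μp μm Xp Xm rp rm : ℝ)
    (hμp : μp = Real.sqrt (1 + 16 * s * t * sin γ ^ 2))
    (hμm : μm = Real.sqrt (1 - 16 * s * t * cos γ ^ 2))
    (hXp : Xp = (-2 * μm * sin γ ^ 2 + 2 * μp * cos γ ^ 2) / (2 + (μm + μp) * sin (2 * γ)))
    (hXm : Xm = (2 * μm * sin γ ^ 2 + 2 * μp * cos γ ^ 2) / (2 - (μm - μp) * sin (2 * γ)))
    (hrp : rp = π / 2 - 2 * arctan Xp) (hrm : rm = π / 2 - 2 * arctan Xm) :
    rp + rm = 2 * γ := by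
  have hpi := Real.pi_gt_three
  have hγlt : γ < π / 2 := by linarith
  have hsi : 0 < sin γ := Real.sin_pos_of_pos_of_lt_pi hγ1 (by linarith)
  have hc : 0 < cos γ := Real.cos_pos_of_mem_Ioo ⟨by linarith, hγlt⟩
  have hsi1 : sin γ ≤ 1 := Real.sin_le_one γ
  have hc1 : cos γ ≤ 1 := Real.cos_le_one γ
  have hpyth : sin γ ^ 2 + cos γ ^ 2 = 1 := Real.sin_sq_add_cos_sq γ
  have hst : 0 < s + t := by linarith
  -- closed forms for μp, μm
  have hμpv : μp = 2 * (s + t) := by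
    rw [hμp]
    have h1 : 1 + 16 * s * t * sin γ ^ 2 = (2 * (s + t)) ^ 2 := by
      linear_combination (-4 : ℝ) * hclose
    rw [h1, Real.sqrt_sq (by linarith)]
  have hμmv : μm = 2 * (s - t) := by
    rw [hμm]
    have h1 : 1 - 16 * s * t * cos γ ^ 2 = (2 * (s - t)) ^ 2 := by
      linear_combination (-4 : ℝ) * hclose - (16 * s * t) * hpyth
    rw [h1, Real.sqrt_sq (by linarith)]
  have hs2 : sin (2 * γ) = 2 * sin γ * cos γ := Real.sin_two_mul γ
  -- rewrite Xp, Xm with explicit numerators and denominators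
  have hXp' : Xp = (4*(s+t)*cos γ^2 - 4*(s-t)*sin γ^2) / (2 + 8*s*sin γ*cos γ) := by
    rw [hXp, hμpv, hμmv, hs2]; ring_nf
  have hXm' : Xm = (4*(s-t)*sin γ^2 + 4*(s+t)*cos γ^2) / (2 + 8*t*sin γ*cos γ) := by
    rw [hXm, hμpv, hμmv, hs2]; ring_nf
  set Np := 4*(s+t)*cos γ^2 - 4*(s-t)*sin γ^2 with hNpd
  set Nm := 4*(s-t)*sin γ^2 + 4*(s+t)*cos γ^2 with hNmd
  set Dp := 2 + 8*s*sin γ*cos γ with hDpd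
  set Dm := 2 + 8*t*sin γ*cos γ with hDmd
  -- denominators are positive
  have hDp : (0:ℝ) < Dp := by
    have := mul_pos hsi hc
    rw [hDpd]; nlinarith
  have hDm : (0:ℝ) < Dm := by
    rw [hDmd]
    rcases le_or_gt 0 t with h | h
    · nlinarith [mul_pos hsi hc]
    · have h1 : 4 * s * t * sin γ ^ 2 > -(1/4) := by nlinarith [sq_nonneg (s + t)]
      have h2 : (t * sin γ) ^ 2 < 1 / 16 := by nlinarith
      nlinarith [mul_pos hsi hc, sq_nonneg (1 + 4 * t * sin γ * cos γ), mul_pos hsi hc]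
  -- key polynomial identity (from Pythagoras and the closing condition)
  have hN : sin γ * (Np * Dm + Nm * Dp) = cos γ * (Dp * Dm - Np * Nm) := by
    rw [hNpd, hNmd, hDpd, hDmd]
    linear_combination (16 * cos γ * (t^2*sin γ^2 + s^2*sin γ^2 + s^2*cos γ^2
      + 2*s*t*cos γ^2 + t^2*cos γ^2 + s^2 - 2*s*t*sin γ^2 + 2*s*t + t^2)) * hpyth
      + (16 * cos γ) * hclose
  -- sum and product of Xp, Xm
  have hXsum : Xp + Xm = (Np * Dm + Nm * Dp) / (Dp * Dm) := by
    rw [hXp', hXm']; field_simp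
  have hXprod : 1 - Xp * Xm = (Dp * Dm - Np * Nm) / (Dp * Dm) := by
    rw [hXp', hXm']; field_simp
  have key : sin γ * (Xp + Xm) = cos γ * (1 - Xp * Xm) := by
    rw [hXsum, hXprod, ← mul_div_assoc, ← mul_div_assoc, hN]
  -- positivity of the sum
  have hsum : 0 < Xp + Xm := by
    rw [hXsum]
    apply div_pos _ (mul_pos hDp hDm)
    rw [hNpd, hNmd, hDpd, hDmd]
    nlinarith [mul_pos hst (mul_pos hc hc),
      mul_nonneg (mul_nonneg hsi.le hc.le) (sq_nonneg ((s+t)*cos γ)),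
      mul_nonneg (mul_nonneg hsi.le hc.le) (sq_nonneg ((s-t)*sin γ))]
  have h1m : 0 < 1 - Xp * Xm := by
    have h0 : 0 < cos γ * (1 - Xp * Xm) := key ▸ mul_pos hsi hsum
    nlinarith [h0, hc]
  have hprod : Xp * Xm < 1 := by linarith
  -- quotient equals cot γ
  have hq : (Xp + Xm) / (1 - Xp * Xm) = cos γ / sin γ := by
    rw [div_eq_div_iff (by linarith) (ne_of_gt hsi)]
    linear_combination key
  -- arctan of cot γ
  have hcot : cos γ / sin γ = tan (π / 2 - γ) := by
    rw [Real.tan_pi_div_two_sub, Real.tan_eq_sin_div_cos, inv_div]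
  have harc : arctan Xp + arctan Xm = π / 2 - γ := by
    rw [Real.arctan_add hprod, hq, hcot, Real.arctan_tan (by linarith) (by linarith)]
  rw [hrp, hrm]
  linarith
end

section
/- Let s, t be real numbers and let v : ℝ → ℝ be twice differentiable with v(x) ≠ 0 for all x, satisfying both (v′(x))² = −(v(x)² − 4s²)(v(x)² − 4t²) and v″(x) = −2·v(x)³ + 4(s² + t²)·v(x) for all x ∈ ℝ. Then the function u₀ := v′/v is twice differentiable and satisfies −u₀″(x) − (2·v(x)² + 32·s²t²/v(x)²)·u₀(x) = 0 for all x ∈ ℝ. -/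
/-!
Differentiating `u₀ = v′/v` once and eliminating `v″` and `(v′)²` with the two equations gives
`u₀′ = −v² + 16s²t²/v²`, a function of `v` alone. Differentiating again produces the factor
`v′ = u₀ v`, so `u₀″ = −(2v² + 32s²t²/v²) u₀`.
-/

section

variable {𝕜 : Type*} [NontriviallyNormedField 𝕜] {v : 𝕜 → 𝕜} {x : 𝕜}

theorem hasDerivAt_logDeriv (hv : DifferentiableAt 𝕜 v x)
    (hv' : DifferentiableAt 𝕜 (deriv v) x) (hx : v x ≠ 0) :
    HasDerivAt (logDeriv v) (deriv (deriv v) x / v x - logDeriv v x ^ 2) x := by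
  refine (hv'.hasDerivAt.div hv.hasDerivAt hx).congr_deriv ?_
  rw [logDeriv_apply]
  field_simp

theorem hasDerivAt_neg_sq_add_div_sq (c : 𝕜) (hv : DifferentiableAt 𝕜 v x) (hx : v x ≠ 0) :
    HasDerivAt (fun y => -v y ^ 2 + c / v y ^ 2)
      (-(2 * v x ^ 2 + 2 * c / v x ^ 2) * logDeriv v x) x := by
  have hsq : HasDerivAt (fun y => v y ^ 2) (2 * v x * deriv v x) x := by
    simpa using hv.hasDerivAt.fun_pow 2
  refine (hsq.neg.add ((hasDerivAt_const x c).div hsq (pow_ne_zero 2 hx))).congr_deriv ?_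
  rw [logDeriv_apply]
  field_simp
  ring

end

theorem deriv_logDeriv_of_ode {s t : ℝ} {v : ℝ → ℝ} {x : ℝ} (hv : DifferentiableAt ℝ v x)
    (hv' : DifferentiableAt ℝ (deriv v) x) (hx : v x ≠ 0)
    (hode1 : deriv v x ^ 2 = -((v x ^ 2 - 4 * s ^ 2) * (v x ^ 2 - 4 * t ^ 2)))
    (hode2 : deriv (deriv v) x = -2 * v x ^ 3 + 4 * (s ^ 2 + t ^ 2) * v x) :
    deriv (logDeriv v) x = -v x ^ 2 + 16 * s ^ 2 * t ^ 2 / v x ^ 2 := by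
  rw [(hasDerivAt_logDeriv hv hv' hx).deriv, hode2, logDeriv_apply, div_pow, hode1]
  field_simp
  ring

/-- If `v` is a nowhere-vanishing twice differentiable solution of
`(v′)² = −(v² − 4s²)(v² − 4t²)` and `v″ = −2v³ + 4(s² + t²)v`, then
`u₀ = v′/v` is twice differentiable and is a zero eigenfunction of the
rotational Jacobi operator `L̂₀ = −∂ₓ∂ₓ − 2v² − 32s²t²v⁻²`. -/
theorem jacobi_field_u0 (s t : ℝ) (v : ℝ → ℝ)
    (hv : ∀ x, DifferentiableAt ℝ v x)
    (hv' : ∀ x, DifferentiableAt ℝ (deriv v) x)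
    (hvne : ∀ x, v x ≠ 0)
    (hode1 : ∀ x, (deriv v x) ^ 2 = -((v x ^ 2 - 4 * s ^ 2) * (v x ^ 2 - 4 * t ^ 2)))
    (hode2 : ∀ x, deriv (deriv v) x = -2 * v x ^ 3 + 4 * (s ^ 2 + t ^ 2) * v x) :
    (∀ x, DifferentiableAt ℝ (fun x' => deriv v x' / v x') x) ∧
    (∀ x, DifferentiableAt ℝ (deriv fun x' => deriv v x' / v x') x) ∧
    (∀ x, -(deriv (deriv fun x' => deriv v x' / v x') x)
        - (2 * v x ^ 2 + 32 * s ^ 2 * t ^ 2 / v x ^ 2) * (deriv v x / v x) = 0) := by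
  change (∀ x, DifferentiableAt ℝ (logDeriv v) x) ∧ (∀ x, DifferentiableAt ℝ (deriv (logDeriv v)) x) ∧
    ∀ x, -deriv (deriv (logDeriv v)) x
      - (2 * v x ^ 2 + 32 * s ^ 2 * t ^ 2 / v x ^ 2) * logDeriv v x = 0
  have hu' : deriv (logDeriv v) = fun x => -v x ^ 2 + 16 * s ^ 2 * t ^ 2 / v x ^ 2 :=
    funext fun x => deriv_logDeriv_of_ode (hv x) (hv' x) (hvne x) (hode1 x) (hode2 x)
  have hu'' := fun x => hasDerivAt_neg_sq_add_div_sq (16 * s ^ 2 * t ^ 2) (hv x) (hvne x)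
  refine ⟨fun x => (hasDerivAt_logDeriv (hv x) (hv' x) (hvne x)).differentiableAt,
    fun x => hu' ▸ (hu'' x).differentiableAt, fun x => ?_⟩
  rw [hu', (hu'' x).deriv]
  ring
end
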